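/- The difference between the size of a target set achieving the maximum activation time and the size of a minimum target set can be arbitrarily large: for every integer k > 1 there exists a tree T with threshold function τ whose unique minimum target set has size 1, but every target set S₀ with t_τ(S₀) = t_τ(T) has size at least k. -/

import Mathlib

namespace TSS

variable {V : Type*}

/-- The interval (one activation step): `S` together with all vertices having
at least `τ v` neighbors in `S`. -/
def interval (G : SimpleGraph V) (τ : V → ℕ) (S : Set V) : Set V :=
  S ∪ {v | τ v ≤ (G.neighborSet v ∩ S).ncard}

/-- `S` is a target set if iterating the interval operator reaches all of `V`. -/
def IsTargetSet (G : SimpleGraph V) (τ : V → ℕ) (S : Set V) : Prop :=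
  ∃ t : ℕ, (interval G τ)^[t] S = Set.univ

/-- The activation time of a set: least `t` with `I^[t+1] S = I^[t] S`. -/
noncomputable def actTime (G : SimpleGraph V) (τ : V → ℕ) (S : Set V) : ℕ :=
  sInf {t : ℕ | (interval G τ)^[t + 1] S = (interval G τ)^[t] S}

/-- The maximum activation time over all target sets. -/
noncomputable def maxTime (G : SimpleGraph V) (τ : V → ℕ) : ℕ :=
  sSup {t : ℕ | ∃ S : Set V, IsTargetSet G τ S ∧ actTime G τ S = t}

/-- The activation time of a vertex `v` for an initial set `S`. -/
noncomputable def vTime (G : SimpleGraph V) (τ : V → ℕ) (S : Set V) (v : V) : ℕ :=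
  sInf {k : ℕ | v ∈ (interval G τ)^[k] S}

/-- The set of vertices eventually activated from `S`. -/
def hull (G : SimpleGraph V) (τ : V → ℕ) (S : Set V) : Set V :=
  {v | ∃ k : ℕ, v ∈ (interval G τ)^[k] S}

end TSS

/-!
The witness is the star `K_{1,k+1}` whose center has threshold `k` and whose leaves have
threshold `1`. The center alone activates everything in one round. A set avoiding the center
with fewer than `k` vertices is a fixed point of the activation step, so every target set
avoiding the center has at least `k ≥ 2` vertices; hence `{center}` is the unique target set of
size one. Every target set is done after two rounds, and `k` leaves (but not all of them) need
exactly two: the center in round one, the remaining leaves in round two. So the maximum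
activation time is `2`, which no set containing the center attains.
-/

namespace TSS

variable {V : Type*}

section Dynamics

variable {G : SimpleGraph V} {τ : V → ℕ} {S : Set V}

lemma subset_interval : S ⊆ interval G τ S := Set.subset_union_left

@[simp] lemma interval_univ : interval G τ Set.univ = Set.univ :=
  Set.eq_univ_of_univ_subset subset_interval

lemma IsTargetSet.eq_univ_of_interval_eq_self (hS : IsTargetSet G τ S)
    (hfix : interval G τ S = S) : S = Set.univ := by
  obtain ⟨t, ht⟩ := hS
  rwa [Function.iterate_fixed hfix] at ht

lemma actTime_le_of_iterate_eq_univ {t : ℕ} (ht : (interval G τ)^[t] S = Set.univ) :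
    actTime G τ S ≤ t :=
  Nat.sInf_le <| by rw [Set.mem_ofPred_eq, Function.iterate_succ_apply', ht, interval_univ]

lemma actTime_eq_of_iterate_succ_eq {t : ℕ}
    (hstop : (interval G τ)^[t + 1] S = (interval G τ)^[t] S)
    (hmove : ∀ s < t, (interval G τ)^[s + 1] S ≠ (interval G τ)^[s] S) :
    actTime G τ S = t :=
  le_antisymm (Nat.sInf_le hstop)
    (le_csInf ⟨t, hstop⟩ fun s hs => not_lt.1 fun hlt => hmove s hlt hs)

lemma maxTime_eq_of_forall_actTime_le {m : ℕ}
    (hle : ∀ T, IsTargetSet G τ T → actTime G τ T ≤ m)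
    (hS : IsTargetSet G τ S) (hm : actTime G τ S = m) : maxTime G τ = m :=
  IsGreatest.csSup_eq ⟨⟨S, hS, hm⟩, by rintro _ ⟨T, hT, rfl⟩; exact hle T hT⟩

end Dynamics

section Star

variable {c : V}

def starGraph (c : V) : SimpleGraph V := SimpleGraph.fromRel fun x _ => x = c

@[simp] lemma starGraph_adj {u v : V} :
    (starGraph c).Adj u v ↔ u ≠ v ∧ (u = c ∨ v = c) :=
  SimpleGraph.fromRel_adj _ u v

lemma neighborSet_starGraph_self : (starGraph c).neighborSet c = {c}ᶜ := by
  ext v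
  simp [eq_comm]

lemma neighborSet_starGraph_of_ne {v : V} (hv : v ≠ c) : (starGraph c).neighborSet v = {c} := by
  ext w
  simp only [SimpleGraph.mem_neighborSet, starGraph_adj, hv, false_or, Set.mem_singleton_iff]
  exact ⟨And.right, fun hw => ⟨hw ▸ hv, hw⟩⟩

lemma starGraph_connected : (starGraph c).Connected := by
  have hc : ∀ v, (starGraph c).Reachable v c := fun v => by
    by_cases hv : v = c
    · rw [hv]
    · exact SimpleGraph.Adj.reachable (by simp [hv])
  exact (SimpleGraph.connected_iff _).2 ⟨fun u v => (hc u).trans (hc v).symm, ⟨c⟩⟩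

lemma starGraph_isAcyclic : (starGraph c).IsAcyclic := by
  -- deleting the edge `s(v, c)` isolates the leaf `v`
  have hbridge : ∀ v, v ≠ c → (starGraph c).IsBridge s(v, c) := by
    rintro v hv ⟨p⟩
    cases p with
    | nil => exact hv rfl
    | cons h _ =>
      simp only [SimpleGraph.deleteEdges_adj, starGraph_adj, Set.mem_singleton_iff] at h
      obtain ⟨⟨-, hv' | rfl⟩, hne⟩ := h
      exacts [hv hv', hne rfl]
  rw [SimpleGraph.isAcyclic_iff_forall_adj_isBridge]
  rintro u v ⟨huv, rfl | rfl⟩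
  · rw [Sym2.eq_swap]
    exact hbridge v huv.symm
  · exact hbridge u huv

lemma starGraph_isTree : (starGraph c).IsTree := ⟨starGraph_connected, starGraph_isAcyclic⟩

open Classical in
noncomputable def starThreshold (c : V) (k : ℕ) : V → ℕ := fun v => if v = c then k else 1

variable {k : ℕ} {S : Set V}

lemma mem_interval_star_of_ne {v : V} (hv : v ≠ c) :
    v ∈ interval (starGraph c) (starThreshold c k) S ↔ v ∈ S ∨ c ∈ S := by
  by_cases hc : c ∈ S <;>
    simp [interval, starThreshold, neighborSet_starGraph_of_ne hv, hv, hc]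

lemma center_mem_interval_star_iff (hc : c ∉ S) :
    c ∈ interval (starGraph c) (starThreshold c k) S ↔ k ≤ S.ncard := by
  have hleaves : {c}ᶜ ∩ S = S := Set.inter_eq_right.2 fun v hv (hvc : v = c) => hc (hvc ▸ hv)
  simp [interval, starThreshold, neighborSet_starGraph_self, hleaves, hc]

lemma interval_star_eq_univ (hc : c ∈ S) :
    interval (starGraph c) (starThreshold c k) S = Set.univ := by
  refine Set.eq_univ_of_forall fun v => ?_
  by_cases hv : v = c
  · subst hv
    exact subset_interval hc
  · exact (mem_interval_star_of_ne hv).2 (Or.inr hc)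

lemma interval_star_eq_self (hc : c ∉ S) (hS : S.ncard < k) :
    interval (starGraph c) (starThreshold c k) S = S := by
  ext v
  by_cases hv : v = c
  · subst hv
    simpa [center_mem_interval_star_iff hc, hc] using hS
  · simp [mem_interval_star_of_ne hv, hc]

lemma interval_star_eq_insert (hc : c ∉ S) (hS : k ≤ S.ncard) :
    interval (starGraph c) (starThreshold c k) S = insert c S := by
  ext v
  by_cases hv : v = c
  · subst hv
    simpa [center_mem_interval_star_iff hc] using hS
  · simp [mem_interval_star_of_ne hv, hc, hv]

lemma IsTargetSet.le_ncard_of_center_notMem (hT : IsTargetSet (starGraph c) (starThreshold c k) S)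
    (hc : c ∉ S) : k ≤ S.ncard := by
  by_contra! hS
  exact hc ((hT.eq_univ_of_interval_eq_self (interval_star_eq_self hc hS)).symm ▸ Set.mem_univ c)

lemma iterate_two_interval_star (hc : c ∉ S) (hS : k ≤ S.ncard) :
    (interval (starGraph c) (starThreshold c k))^[2] S = Set.univ := by
  rw [Function.iterate_succ_apply', Function.iterate_one, interval_star_eq_insert hc hS,
    interval_star_eq_univ (Set.mem_insert c S)]

lemma actTime_star_le_one (hc : c ∈ S) : actTime (starGraph c) (starThreshold c k) S ≤ 1 :=
  actTime_le_of_iterate_eq_univ (interval_star_eq_univ hc)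

lemma actTime_star_le_two (hT : IsTargetSet (starGraph c) (starThreshold c k) S) :
    actTime (starGraph c) (starThreshold c k) S ≤ 2 := by
  by_cases hc : c ∈ S
  · exact (actTime_star_le_one hc).trans one_le_two
  · exact actTime_le_of_iterate_eq_univ
      (iterate_two_interval_star hc (hT.le_ncard_of_center_notMem hc))

lemma actTime_star_eq_two (hc : c ∉ S) (hS : k ≤ S.ncard) {v : V} (hvc : v ≠ c) (hv : v ∉ S) :
    actTime (starGraph c) (starThreshold c k) S = 2 := by
  refine actTime_eq_of_iterate_succ_eq (by rw [Function.iterate_succ_apply' _ 2,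
    iterate_two_interval_star hc hS, interval_univ]) fun s hs => ?_
  interval_cases s
  · simp only [zero_add, Function.iterate_one, Function.iterate_zero_apply,
      interval_star_eq_insert hc hS]
    exact fun h => hc (h ▸ Set.mem_insert c S)
  · rw [iterate_two_interval_star hc hS, Function.iterate_one, interval_star_eq_insert hc hS]
    exact fun h => (Set.mem_insert_iff.1 (h ▸ Set.mem_univ v)).elim hvc hv

lemma isTargetSet_star_singleton : IsTargetSet (starGraph c) (starThreshold c k) {c} :=
  ⟨1, interval_star_eq_univ rfl⟩

lemma IsTargetSet.eq_singleton_or_two_le_ncard [Finite V] (hk : 2 ≤ k)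
    (hT : IsTargetSet (starGraph c) (starThreshold c k) S) : S = {c} ∨ 2 ≤ S.ncard := by
  by_cases hc : c ∈ S
  · refine (le_or_gt 2 S.ncard).symm.imp_left fun hS => ?_
    exact (Set.eq_of_subset_of_ncard_le (Set.singleton_subset_iff.2 hc)
      (by rw [Set.ncard_singleton]; omega)).symm
  · exact Or.inr (hk.trans (hT.le_ncard_of_center_notMem hc))

lemma starThreshold_mem_Icc [Finite V] (hk : 1 ≤ k) (hkV : k < Nat.card V) (v : V) :
    starThreshold c k v ∈ Set.Icc 1 ((starGraph c).neighborSet v).ncard := by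
  by_cases hv : v = c
  · subst hv
    rw [neighborSet_starGraph_self, Set.ncard_compl, Set.ncard_singleton]
    simp only [starThreshold, if_pos, Set.mem_Icc]
    omega
  · simp [starThreshold, hv, neighborSet_starGraph_of_ne hv]

end Star

end TSS

open TSS

/-- for every k > 1 there is a tree with a threshold function whose
unique minimum target set has size 1, but every target set achieving the maximum
activation time has size at least k. -/
theorem stmt15 (k : ℕ) (hk : 1 < k) :
    ∃ (n : ℕ) (G : SimpleGraph (Fin n)) (τ : Fin n → ℕ),
      G.IsTree ∧
      (∀ x : Fin n, 1 ≤ τ x ∧ τ x ≤ (G.neighborSet x).ncard) ∧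
      (∃ r : Fin n, TSS.IsTargetSet G τ {r} ∧
        ∀ S : Set (Fin n), TSS.IsTargetSet G τ S → S = {r} ∨ 2 ≤ S.ncard) ∧
      (∀ S₀ : Set (Fin n), TSS.IsTargetSet G τ S₀ →
        TSS.actTime G τ S₀ = TSS.maxTime G τ → k ≤ S₀.ncard) := by
  have hwitness : ({0, 1} : Set (Fin (k + 2)))ᶜ.ncard = k := by
    rw [Set.ncard_compl, Set.ncard_pair zero_ne_one, Nat.card_eq_fintype_card, Fintype.card_fin]
    omega
  have hmax : maxTime (starGraph (0 : Fin (k + 2))) (starThreshold 0 k) = 2 :=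
    maxTime_eq_of_forall_actTime_le (fun _ => actTime_star_le_two)
      ⟨2, iterate_two_interval_star (by simp) hwitness.ge⟩
      (actTime_star_eq_two (v := 1) (by simp) hwitness.ge one_ne_zero (by simp))
  refine ⟨k + 2, starGraph 0, starThreshold 0 k, starGraph_isTree,
    starThreshold_mem_Icc hk.le (by simp), ⟨0, isTargetSet_star_singleton,
      fun S hS => hS.eq_singleton_or_two_le_ncard hk⟩, fun S hS hS2 => ?_⟩
  rw [hmax] at hS2
  exact hS.le_ncard_of_center_notMem fun hc => by
    have := actTime_star_le_one (k := k) hc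
    omega
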